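/- (Indistinguishability of causal structures under backtracking.) Consider the three deterministic SCMs over Boolean endogenous variables X, Y and exogenous variable U ∈ Bool: (1) chain X→Y: X := U, Y := X; (2) reversed chain Y→X: Y := U, X := Y; (3) common cause: X := U, Y := U. All three have identical reduced form (X,Y) = (U,U), and hence for any probability mass function P on Bool and any backtracking conditional P_B, they induce identical joint probabilities P_B(Y* = y*, X = x) for all y*, x ∈ Bool. -/
import Mathlib


/-- Solution (reduced form) of the chain SCM `X := U, Y := X`. -/
def solChain (u : Bool) : Bool × Bool :=
  let x := u
  let y := x
  (x, y)

/-- Solution of the reversed chain SCM `Y := U, X := Y`. -/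
def solRev (u : Bool) : Bool × Bool :=
  let y := u
  let x := y
  (x, y)

/-- Solution of the common-cause SCM `X := U, Y := U`. -/
def solCC (u : Bool) : Bool × Bool := (u, u)

/-- Probability of the backtracking counterfactual `Y* = y*, X = x` for an SCM
with solution function `S`, prior `P`, and backtracking conditional `PB`. -/
def btProb (S : Bool → Bool × Bool) (P : Bool → ℝ) (PB : Bool → Bool → ℝ)
    (y' x : Bool) : ℝ :=
  ∑ u' : Bool, ∑ u : Bool, P u * PB u' u *
    (if (S u').2 = y' then (1:ℝ) else 0) * (if (S u).1 = x then (1:ℝ) else 0)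

/-- Indistinguishability of causal structures under backtracking: the chain,
reversed chain, and common-cause SCMs all have reduced form `u ↦ (u, u)` and
hence identical backtracking counterfactual probabilities. -/
theorem stmt_6 :
    (∀ u, solChain u = (u, u) ∧ solRev u = (u, u) ∧ solCC u = (u, u)) ∧
    (∀ (P : Bool → ℝ) (PB : Bool → Bool → ℝ) (y' x : Bool),
      btProb solChain P PB y' x = btProb solRev P PB y' x ∧
      btProb solRev P PB y' x = btProb solCC P PB y' x) := by
  refine ⟨fun u => ⟨rfl, rfl, rfl⟩, fun P PB y x => ⟨rfl, rfl⟩⟩
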